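/- Let D, W, δ satisfy the sl₂ relations [W,D]=2D, [W,δ]=-2δ, [δ,D]=W on a vector space V, let k > 2 be an integer, and suppose F ∈ V satisfies W·F = k·F and δ^m·F = 0 for all m > k/2. Define π_k(F) = Σ_{0 ≤ m ≤ k/2} ((-1)^m / (m!·(k-m-1)_m))·D^m·δ^m·F. Then δ(π_k(F)) = 0. Moreover if δ·F = 0 then π_k(F) = F. -/

import Mathlib

/-! Each term of `π_k F` is a multiple of `D^m δ^m F`, and commuting `δ` past `D^m` on a vector
of weight `k - 2m` gives `δ (D^m δ^m F) = D^m δ^(m+1) F + m (k - m - 1) D^(m-1) δ^m F`.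
The coefficients of `π_k` are chosen so that the second summand of the `m`-th term cancels the
first summand of the `(m-1)`-st, so `δ (π_k F)` telescopes to a multiple of
`D^(k/2) δ^(k/2+1) F`, which vanishes by the depth assumption. -/

open Finset

/-- Rising factorial `x (x+1) ⋯ (x+n-1)` for complex `x`. -/
noncomputable def risingC (x : ℂ) (n : ℕ) : ℂ := ∏ i ∈ Finset.range n, (x + i)

namespace Sl2

variable {R V : Type*} [CommRing R] [AddCommGroup V] [Module R V] {D W δ : Module.End R V}

theorem lowering_raising_apply (h3 : δ * D - D * δ = W) (v : V) :
    δ (D v) = D (δ v) + W v := by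
  rw [← h3, LinearMap.sub_apply, Module.End.mul_apply, Module.End.mul_apply]
  abel

theorem weight_raising_apply (h1 : W * D - D * W = 2 * D) (v : V) :
    W (D v) = D (W v) + (2 : R) • D v := by
  have h := LinearMap.congr_fun h1 v
  simp only [LinearMap.sub_apply, Module.End.mul_apply, two_mul, LinearMap.add_apply] at h
  rw [sub_eq_iff_eq_add'] at h
  rw [h, two_smul]

theorem weight_lowering_apply (h2 : W * δ - δ * W = -2 * δ) (v : V) :
    W (δ v) = δ (W v) - (2 : R) • δ v := by
  have h := LinearMap.congr_fun h2 v
  simp only [LinearMap.sub_apply, Module.End.mul_apply, neg_mul, two_mul, LinearMap.neg_apply,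
    LinearMap.add_apply] at h
  rw [sub_eq_iff_eq_add'] at h
  rw [h, two_smul]
  abel

theorem weight_lowering_pow_apply (h2 : W * δ - δ * W = -2 * δ) {c : R} {v : V}
    (hv : W v = c • v) (n : ℕ) : W ((δ ^ n) v) = (c - 2 * n) • (δ ^ n) v := by
  induction n with
  | zero => simpa using hv
  | succ n ih =>
    rw [pow_succ', Module.End.mul_apply, weight_lowering_apply h2, ih, map_smul]
    push_cast
    module

theorem lowering_raising_pow_succ_apply (h1 : W * D - D * W = 2 * D) (h3 : δ * D - D * δ = W)
    (n : ℕ) (v : V) :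
    δ ((D ^ (n + 1)) v) =
      (D ^ (n + 1)) (δ v) + ((n : R) + 1) • (D ^ n) (W v) + (((n : R) + 1) * n) • (D ^ n) v := by
  induction n generalizing v with
  | zero => simp [lowering_raising_apply h3]
  | succ n ih =>
    have hD : ∀ (m : ℕ) (w : V), (D ^ (m + 1)) w = (D ^ m) (D w) := fun m w => by
      rw [pow_succ, Module.End.mul_apply]
    rw [hD (n + 1) v, ih, lowering_raising_apply h3, weight_raising_apply h1]
    simp only [map_add, map_smul, ← hD]
    push_cast
    module

theorem lowering_raising_pow_succ_apply_of_weight (h1 : W * D - D * W = 2 * D)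
    (h3 : δ * D - D * δ = W) {c : R} {v : V} (hv : W v = c • v) (n : ℕ) :
    δ ((D ^ (n + 1)) v) = (D ^ (n + 1)) (δ v) + (((n : R) + 1) * (c + n)) • (D ^ n) v := by
  rw [lowering_raising_pow_succ_apply h1 h3, hv, map_smul, smul_smul, add_assoc, ← add_smul]
  ring_nf

end Sl2

theorem risingC_succ (x : ℂ) (n : ℕ) : risingC x (n + 1) = x * risingC (x + 1) n := by
  simp only [risingC, prod_range_succ', Nat.cast_add, Nat.cast_one, Nat.cast_zero, add_zero]
  rw [mul_comm]
  congr 1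
  exact prod_congr rfl fun i _ => by ring

theorem risingC_natCast_ne_zero {a : ℕ} (ha : 0 < a) (n : ℕ) : risingC a n ≠ 0 :=
  prod_ne_zero_iff.mpr fun i _ => by exact_mod_cast (by omega : a + i ≠ 0)

noncomputable def primitiveCoeff (k m : ℕ) : ℂ :=
  (-1 : ℂ) ^ m / ((m.factorial : ℂ) * risingC ((k : ℂ) - (m : ℂ) - 1) m)

theorem primitiveCoeff_zero (k : ℕ) : primitiveCoeff k 0 = 1 := by
  simp [primitiveCoeff, risingC]

theorem primitiveCoeff_succ_mul {k j : ℕ} (hk : 2 < k) (hj : 2 * (j + 1) ≤ k) :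
    primitiveCoeff k (j + 1) * (((j : ℂ) + 1) * ((k : ℂ) - j - 2)) = -primitiveCoeff k j := by
  obtain ⟨t, rfl⟩ := Nat.exists_eq_add_of_le (show j + 2 ≤ k by omega)
  have ht : (t : ℂ) ≠ 0 := by exact_mod_cast (by omega : t ≠ 0)
  have hR : risingC ((t : ℂ) + 1) j ≠ 0 := by exact_mod_cast risingC_natCast_ne_zero t.succ_pos j
  have hfac : (j.factorial : ℂ) ≠ 0 := Nat.cast_ne_zero.mpr j.factorial_ne_zero
  have hj1 : (j : ℂ) + 1 ≠ 0 := Nat.cast_add_one_ne_zero j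
  unfold primitiveCoeff
  rw [show ((j + 2 + t : ℕ) : ℂ) - (j + 1 : ℕ) - 1 = t by push_cast; ring,
    show ((j + 2 + t : ℕ) : ℂ) - j - 1 = t + 1 by push_cast; ring,
    show ((j + 2 + t : ℕ) : ℂ) - j - 2 = t by push_cast; ring,
    risingC_succ, Nat.factorial_succ, pow_succ]
  push_cast
  field_simp

section Projection

variable {V : Type*} [AddCommGroup V] [Module ℂ V]

noncomputable def primitiveProjection (D δ : Module.End ℂ V) (k : ℕ) (F : V) : V :=
  ∑ m ∈ range (k / 2 + 1), primitiveCoeff k m • (D ^ m) ((δ ^ m) F)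

theorem primitiveProjection_eq_self_of_lowering_eq_zero (D δ : Module.End ℂ V) (k : ℕ) {F : V}
    (hF : δ F = 0) : primitiveProjection D δ k F = F := by
  rw [primitiveProjection, sum_eq_single_of_mem 0 (by simp)]
  · simp [primitiveCoeff_zero]
  · intro m _ hm
    obtain ⟨j, rfl⟩ := Nat.exists_eq_add_one_of_ne_zero hm
    rw [pow_succ δ, Module.End.mul_apply, hF, map_zero, map_zero, smul_zero]

variable {D W δ : Module.End ℂ V} {k : ℕ} {F : V}

theorem lowering_primitiveTerm_succ (h1 : W * D - D * W = 2 * D) (h2 : W * δ - δ * W = -2 * δ)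
    (h3 : δ * D - D * δ = W) (hk : 2 < k) (hW : W F = (k : ℂ) • F) {j : ℕ}
    (hj : 2 * (j + 1) ≤ k) :
    δ (primitiveCoeff k (j + 1) • (D ^ (j + 1)) ((δ ^ (j + 1)) F)) =
      primitiveCoeff k (j + 1) • (D ^ (j + 1)) ((δ ^ (j + 2)) F) -
        primitiveCoeff k j • (D ^ j) ((δ ^ (j + 1)) F) := by
  have hweight := Sl2.weight_lowering_pow_apply h2 hW (j + 1)
  rw [pow_succ' δ (j + 1), Module.End.mul_apply, map_smul,
    Sl2.lowering_raising_pow_succ_apply_of_weight h1 h3 hweight, smul_add, smul_smul]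
  push_cast
  rw [show (k : ℂ) - 2 * (j + 1) + j = k - j - 2 by ring, primitiveCoeff_succ_mul hk hj, neg_smul,
    sub_eq_add_neg]

theorem lowering_primitiveProjection (h1 : W * D - D * W = 2 * D) (h2 : W * δ - δ * W = -2 * δ)
    (h3 : δ * D - D * δ = W) (hk : 2 < k) (hW : W F = (k : ℂ) • F)
    (hdepth : ∀ m : ℕ, k < 2 * m → (δ ^ m) F = 0) :
    δ (primitiveProjection D δ k F) = 0 := by
  set a : ℕ → V := fun m => primitiveCoeff k m • (D ^ m) ((δ ^ (m + 1)) F)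
  have hterms : ∀ j ∈ range (k / 2), δ (primitiveCoeff k (j + 1) • (D ^ (j + 1)) ((δ ^ (j + 1)) F))
      = a (j + 1) - a j := fun j hj =>
    lowering_primitiveTerm_succ h1 h2 h3 hk hW (by rw [mem_range] at hj; omega)
  have hfirst : δ (primitiveCoeff k 0 • (D ^ 0) ((δ ^ 0) F)) = a 0 := by
    simp [a, map_smul]
  calc δ (primitiveProjection D δ k F)
      = ∑ j ∈ range (k / 2), (a (j + 1) - a j) + a 0 := by
        rw [primitiveProjection, map_sum, sum_range_succ', sum_congr rfl hterms, hfirst]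
    _ = a (k / 2) := by rw [sum_range_sub, sub_add_cancel]
    _ = 0 := by simp only [a, hdepth (k / 2 + 1) (by omega), map_zero, smul_zero]

end Projection

/-- Let `D, W, δ` satisfy the `sl₂` relations on a vector space `V`, let `k > 2` be an
integer, and suppose `F ∈ V` satisfies `W F = k • F` and `δ^m F = 0` for all `m > k/2`.
Define `π_k(F) = Σ_{0 ≤ m ≤ k/2} ((-1)^m / (m!·(k-m-1)_m)) • D^m δ^m F`.
Then `δ(π_k(F)) = 0`; moreover if `δ F = 0` then `π_k(F) = F`. -/
theorem statement6 {V : Type*} [AddCommGroup V] [Module ℂ V]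
    (D W δ : Module.End ℂ V)
    (h1 : W * D - D * W = 2 * D) (h2 : W * δ - δ * W = -2 * δ) (h3 : δ * D - D * δ = W)
    (k : ℕ) (hk : 2 < k) (F : V) (hW : W F = (k : ℂ) • F)
    (hdepth : ∀ m : ℕ, k < 2 * m → (δ ^ m) F = 0) :
    δ (∑ m ∈ Finset.range (k / 2 + 1),
        ((-1 : ℂ) ^ m / ((m.factorial : ℂ) * risingC ((k : ℂ) - (m : ℂ) - 1) m)) •
          (D ^ m) ((δ ^ m) F)) = 0
    ∧ (δ F = 0 →
        (∑ m ∈ Finset.range (k / 2 + 1),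
          ((-1 : ℂ) ^ m / ((m.factorial : ℂ) * risingC ((k : ℂ) - (m : ℂ) - 1) m)) •
            (D ^ m) ((δ ^ m) F)) = F) :=
  ⟨lowering_primitiveProjection h1 h2 h3 hk hW hdepth,
    primitiveProjection_eq_self_of_lowering_eq_zero D δ k⟩
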